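/- arXiv:2307.00836 — 2 statements merged into one kernel-verified Lean document; each statement's English description precedes it below -/
import Mathlib

section
/- Let K ≥ 1, y ∈ {-1,1}, p_1,…,p_K ∈ [0,1], and p̂_1,…,p̂_K ∈ (0,1). Let Z_1,…,Z_K be independent {-1,1}-valued random variables with P(Z_j = y) = p_j. Set w_j = (1/2)·ln(p̂_j/(1−p̂_j)) and x = Σ_{j=1}^K w_j Z_j, and let ŷ be the randomized prediction that, conditionally on Z, equals sign(x) with probability 1 − (1/2)e^{−|x|} and −sign(x) with probability (1/2)e^{−|x|} (internal randomness independent of Z, with sign(0) = 1). Then P(ŷ ≠ y) ≤ (1/2)·Π_{j=1}^K ( p_j·√((1−p̂_j)/p̂_j) + (1−p_j)·√(p̂_j/(1−p̂_j)) ). -/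
/-!
Conditionally on the margin `x`, the GAPTRON errs with probability `e^{-|x|}/2` when
`sign x = y`, and with probability `1 - e^{-|x|}/2 ≤ e^{|x|}/2` (as `cosh ≥ 1`) otherwise: in both
cases at most `e^{-yx}/2`. As the internal randomness is independent of `x`, this gives
`P(ŷ ≠ y) ≤ E[e^{-yx}]/2`, and independence of the experts factors the exponential moment as
`∏_j (p_j e^{-w_j} + (1 - p_j) e^{w_j})`, where `e^{∓w_j}` are the two square roots of the bound.
-/

open MeasureTheory ProbabilityTheory

noncomputable section

/-- The sign function with the convention `sgn 0 = 1`. -/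
def sgn (x : ℝ) : ℝ := if 0 ≤ x then 1 else -1

lemma measurable_sgn : Measurable sgn :=
  Measurable.ite measurableSet_Ici measurable_const measurable_const

lemma sgn_mul_abs (t : ℝ) : sgn t * |t| = t := by
  unfold sgn
  split_ifs with ht
  · simp [abs_of_nonneg ht]
  · simp [abs_of_neg (not_le.mp ht)]

lemma sgn_eq_one_or_eq_neg_one (t : ℝ) : sgn t = 1 ∨ sgn t = -1 := by
  unfold sgn; split_ifs <;> simp

def gaptron (t u : ℝ) : ℝ :=
  if u ≤ (1/2) * Real.exp (-|t|) then -sgn t else sgn t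

lemma measurable_gaptron : Measurable fun r : ℝ × ℝ => gaptron r.1 r.2 := by
  unfold gaptron
  refine Measurable.ite ?_ (measurable_sgn.comp measurable_fst).neg
    (measurable_sgn.comp measurable_fst)
  exact measurableSet_le measurable_snd (by fun_prop)

lemma one_sub_half_exp_neg_le (s : ℝ) : 1 - (1/2) * Real.exp (-s) ≤ (1/2) * Real.exp s := by
  have := Real.one_le_cosh s
  rw [Real.cosh_eq] at this
  linarith

lemma volume_restrict_unitInterval_Iic_le (a : ℝ) :
    volume.restrict (Set.Icc (0:ℝ) 1) (Set.Iic a) ≤ ENNReal.ofReal a := by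
  rw [Measure.restrict_apply measurableSet_Iic]
  calc volume (Set.Iic a ∩ Set.Icc 0 1) ≤ volume (Set.Icc 0 a) :=
        measure_mono fun u hu => ⟨hu.2.1, hu.1⟩
    _ = ENNReal.ofReal a := by rw [Real.volume_Icc, sub_zero]

lemma volume_restrict_unitInterval_Ioi_le (a : ℝ) :
    volume.restrict (Set.Icc (0:ℝ) 1) (Set.Ioi a) ≤ ENNReal.ofReal (1 - a) := by
  rw [Measure.restrict_apply measurableSet_Ioi]
  calc volume (Set.Ioi a ∩ Set.Icc 0 1) ≤ volume (Set.Ioc a 1) :=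
        measure_mono fun u hu => ⟨hu.1, hu.2.2⟩
    _ = ENNReal.ofReal (1 - a) := Real.volume_Ioc

lemma volume_restrict_unitInterval_gaptron_ne_le {y : ℝ} (hy : y = 1 ∨ y = -1) (t : ℝ) :
    volume.restrict (Set.Icc (0:ℝ) 1) {u | gaptron t u ≠ y}
      ≤ ENNReal.ofReal ((1/2) * Real.exp (-(y * t))) := by
  have hyy : y * y = 1 := by rcases hy with rfl | rfl <;> norm_num
  have hny : -y ≠ y := by rcases hy with rfl | rfl <;> norm_num
  have hyt : y * t = y * sgn t * |t| := by rw [mul_assoc, sgn_mul_abs]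
  by_cases hs : sgn t = y
  · have hset : {u | gaptron t u ≠ y} = Set.Iic ((1/2) * Real.exp (-|t|)) := by
      ext u
      show gaptron t u ≠ y ↔ u ≤ _
      unfold gaptron
      split_ifs with hu
      · exact iff_of_true (hs ▸ hny) hu
      · exact iff_of_false (by simp [hs]) hu
    rw [hset, hyt, hs, hyy, one_mul]
    exact volume_restrict_unitInterval_Iic_le _
  · have hs' : sgn t = -y := by
      rcases sgn_eq_one_or_eq_neg_one t with h | h <;> rcases hy with rfl | rfl <;>
        simp [h] at hs ⊢
    have hset : {u | gaptron t u ≠ y} = Set.Ioi ((1/2) * Real.exp (-|t|)) := by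
      ext u
      show gaptron t u ≠ y ↔ _ < u
      unfold gaptron
      split_ifs with hu
      · exact iff_of_false (by simp [hs']) (not_lt.mpr hu)
      · exact iff_of_true (hs' ▸ hny) (not_le.mp hu)
    rw [hset, hyt, hs', ← neg_mul_eq_mul_neg, hyy, neg_one_mul, neg_neg]
    exact (volume_restrict_unitInterval_Ioi_le _).trans
      (ENNReal.ofReal_le_ofReal (one_sub_half_exp_neg_le _))

lemma ProbabilityTheory.IndepFun.measure_preimage_eq_lintegral {Ω α β : Type*} [MeasurableSpace Ω]
    [MeasurableSpace α] [MeasurableSpace β] {μ : Measure Ω} [IsFiniteMeasure μ]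
    {X : Ω → α} {Y : Ω → β} (hXY : IndepFun X Y μ) (hX : Measurable X) (hY : Measurable Y)
    {s : Set (α × β)} (hs : MeasurableSet s) :
    μ ((fun ω => (X ω, Y ω)) ⁻¹' s) = ∫⁻ a, μ.map Y (Prod.mk a ⁻¹' s) ∂μ.map X := by
  rw [← Measure.map_apply (hX.prodMk hY) hs,
    (indepFun_iff_map_prod_eq_prod_map_map hX.aemeasurable hY.aemeasurable).mp hXY,
    Measure.prod_apply hs]

lemma ProbabilityTheory.iIndepFun.indepFun_sumElim_unit {Ω ι β : Type*} [MeasurableSpace Ω]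
    [MeasurableSpace β] {μ : Measure Ω} [Fintype ι] {f : ι → Ω → β} {g : Ω → β}
    (h : iIndepFun (Sum.elim f fun _ : Unit => g) μ) (hf : ∀ i, Measurable (f i))
    (hg : Measurable g) : IndepFun (fun ω i => f i ω) g μ := by
  classical
  let S : Finset (ι ⊕ Unit) := Finset.univ.map Function.Embedding.inl
  let T : Finset (ι ⊕ Unit) := {Sum.inr ()}
  have hST : Disjoint S T := by simp [S, T]
  have hfg : ∀ i, Measurable (Sum.elim f (fun _ : Unit => g) i) := by
    rintro (i | _)
    exacts [hf i, hg]
  have hS : ∀ i, Sum.inl i ∈ S := by simp [S]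
  have hφ : Measurable fun (v : S → β) (i : ι) => v ⟨Sum.inl i, hS i⟩ := by fun_prop
  have hψ : Measurable fun v : T → β => v ⟨Sum.inr (), Finset.mem_singleton_self _⟩ :=
    measurable_pi_apply _
  exact (h.indepFun_finset S T hST hfg).comp hφ hψ

lemma measure_gaptron_ne_le {Ω : Type*} [MeasurableSpace Ω] {μ : Measure Ω}
    [IsFiniteMeasure μ] {X U : Ω → ℝ} (hXU : IndepFun X U μ)
    (hX : Measurable X) (hU : Measurable U)
    (hUdist : μ.map U = volume.restrict (Set.Icc (0:ℝ) 1)) {y : ℝ} (hy : y = 1 ∨ y = -1) :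
    μ {ω | gaptron (X ω) (U ω) ≠ y}
      ≤ ∫⁻ ω, ENNReal.ofReal ((1/2) * Real.exp (-(y * X ω))) ∂μ := by
  have hs : MeasurableSet {r : ℝ × ℝ | gaptron r.1 r.2 ≠ y} :=
    (measurable_gaptron (measurableSet_singleton y)).compl
  calc μ {ω | gaptron (X ω) (U ω) ≠ y}
      = ∫⁻ t, μ.map U {u | gaptron t u ≠ y} ∂μ.map X :=
        hXU.measure_preimage_eq_lintegral hX hU hs
    _ ≤ ∫⁻ t, ENNReal.ofReal ((1/2) * Real.exp (-(y * t))) ∂μ.map X :=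
        lintegral_mono fun t => hUdist ▸ volume_restrict_unitInterval_gaptron_ne_le hy t
    _ = _ := lintegral_map (by fun_prop) hX

lemma lintegral_comp_eq_of_forall_eq_or_eq {Ω α : Type*} [MeasurableSpace Ω] [MeasurableSpace α]
    [MeasurableSingletonClass α] {μ : Measure Ω} {Z : Ω → α} (hZ : Measurable Z) {a b : α}
    (hab : ∀ ω, Z ω = a ∨ Z ω = b) (f : α → ENNReal) :
    ∫⁻ ω, f (Z ω) ∂μ = f a * μ {ω | Z ω = a} + f b * μ {ω | Z ω = a}ᶜ := by
  have hA : MeasurableSet {ω | Z ω = a} := hZ (measurableSet_singleton a)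
  rw [← lintegral_add_compl _ hA,
    setLIntegral_congr_fun hA (g := fun _ => f a) fun ω (h : Z ω = a) => by rw [h],
    setLIntegral_congr_fun hA.compl (g := fun _ => f b)
      fun ω (h : Z ω ≠ a) => by rw [(hab ω).resolve_left h],
    setLIntegral_const, setLIntegral_const]

lemma lintegral_exp_neg_mul_mul_eq {Ω : Type*} [MeasurableSpace Ω] {μ : Measure Ω}
    [IsProbabilityMeasure μ] {Z : Ω → ℝ} (hZ : Measurable Z) (hval : ∀ ω, Z ω = 1 ∨ Z ω = -1)
    {y : ℝ} (hy : y = 1 ∨ y = -1) {p : ℝ} (hp : p ∈ Set.Icc (0:ℝ) 1)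
    (hprob : μ {ω | Z ω = y} = ENNReal.ofReal p) (c : ℝ) :
    ∫⁻ ω, ENNReal.ofReal (Real.exp (-(y * (c * Z ω)))) ∂μ
      = ENNReal.ofReal (p * Real.exp (-c) + (1 - p) * Real.exp c) := by
  have hval' : ∀ ω, Z ω = y ∨ Z ω = -y := fun ω => by
    rcases hy with rfl | rfl <;> rcases hval ω with h | h <;> simp [h]
  have hyy : y * y = 1 := by rcases hy with rfl | rfl <;> norm_num
  have hA : MeasurableSet {ω | Z ω = y} := hZ (measurableSet_singleton y)
  rw [lintegral_comp_eq_of_forall_eq_or_eq hZ hval'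
      (fun z => ENNReal.ofReal (Real.exp (-(y * (c * z))))), prob_compl_eq_one_sub hA, hprob,
    ← ENNReal.ofReal_one, ← ENNReal.ofReal_sub _ hp.1, ← ENNReal.ofReal_mul (Real.exp_pos _).le,
    ← ENNReal.ofReal_mul (Real.exp_pos _).le,
    ← ENNReal.ofReal_add (mul_nonneg (Real.exp_pos _).le hp.1)
      (mul_nonneg (Real.exp_pos _).le (sub_nonneg.mpr hp.2))]
  congr 1
  have h₁ : y * (c * y) = c := by rw [mul_left_comm, hyy, mul_one]
  have h₂ : y * (c * -y) = -c := by rw [mul_neg, mul_neg, h₁]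
  rw [h₁, h₂, neg_neg]
  ring

lemma lintegral_exp_neg_mul_sum_eq_prod {Ω ι : Type*} [MeasurableSpace Ω] {μ : Measure Ω}
    [Fintype ι] {Z : ι → Ω → ℝ} (hind : iIndepFun Z μ) (hZ : ∀ j, Measurable (Z j))
    (w : ι → ℝ) (y : ℝ) :
    ∫⁻ ω, ENNReal.ofReal (Real.exp (-(y * ∑ j, w j * Z j ω))) ∂μ
      = ∏ j, ∫⁻ ω, ENNReal.ofReal (Real.exp (-(y * (w j * Z j ω)))) ∂μ := by
  have hprod : ∀ ω, ENNReal.ofReal (Real.exp (-(y * ∑ j, w j * Z j ω)))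
      = ∏ j, ENNReal.ofReal (Real.exp (-(y * (w j * Z j ω)))) := fun ω => by
    rw [Finset.mul_sum, ← Finset.sum_neg_distrib, Real.exp_sum,
      ENNReal.ofReal_prod_of_nonneg fun j _ => (Real.exp_pos _).le]
  simp_rw [hprod]
  exact lintegral_prod_eq_prod_lintegral_of_indepFun _ _
    (hind.comp (fun j z => ENNReal.ofReal (Real.exp (-(y * (w j * z))))) fun j => by fun_prop)
    fun j => by fun_prop

lemma Real.exp_half_mul_log {a : ℝ} (ha : 0 < a) : Real.exp (1/2 * Real.log a) = √a := by
  rw [← Real.exp_log (Real.sqrt_pos.mpr ha), Real.log_sqrt ha.le]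
  ring_nf

lemma Real.exp_neg_half_mul_log_div {a b : ℝ} (ha : 0 < a) (hb : 0 < b) :
    Real.exp (-(1/2 * Real.log (a / b))) = √(b / a) := by
  rw [← mul_neg, ← Real.log_inv, inv_div, Real.exp_half_mul_log (div_pos hb ha)]

theorem stmt4_general {Ω : Type*} [MeasurableSpace Ω] (μ : Measure Ω) [IsProbabilityMeasure μ]
    (K : ℕ) (y : ℝ) (hy : y = 1 ∨ y = -1)
    (p : Fin K → ℝ) (hp : ∀ j, p j ∈ Set.Icc (0:ℝ) 1)
    (phat : Fin K → ℝ) (hphat : ∀ j, phat j ∈ Set.Ioo (0:ℝ) 1)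
    (Z : Fin K → Ω → ℝ) (hZmeas : ∀ j, Measurable (Z j))
    (hZval : ∀ j ω, Z j ω = 1 ∨ Z j ω = -1)
    (U : Ω → ℝ) (hUmeas : Measurable U)
    (hUdist : Measure.map U μ = volume.restrict (Set.Icc (0:ℝ) 1))
    (hIndep : iIndepFun
      (Sum.elim Z (fun _ : Unit => U)) μ)
    (hprob : ∀ j, μ {ω | Z j ω = y} = ENNReal.ofReal (p j))
    (w : Fin K → ℝ) (hw : ∀ j, w j = (1/2) * Real.log (phat j / (1 - phat j)))
    (x : Ω → ℝ) (hx : ∀ ω, x ω = ∑ j, w j * Z j ω)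
    (Yhat : Ω → ℝ)
    (hYhat : ∀ ω, Yhat ω =
      if U ω ≤ (1/2) * Real.exp (-|x ω|) then -sgn (x ω) else sgn (x ω)) :
    μ {ω | Yhat ω ≠ y}
      ≤ ENNReal.ofReal ((1/2) * ∏ j,
          (p j * Real.sqrt ((1 - phat j) / phat j)
            + (1 - p j) * Real.sqrt (phat j / (1 - phat j)))) := by
  obtain rfl : Yhat = fun ω => gaptron (x ω) (U ω) := funext hYhat
  obtain rfl : x = fun ω => ∑ j, w j * Z j ω := funext hx
  have hZindep : iIndepFun Z μ := iIndepFun.precomp (g := Sum.inl) Sum.inl_injective hIndep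
  have hxU := (hIndep.indepFun_sumElim_unit hZmeas hUmeas).comp
    (φ := fun v => ∑ j, w j * v j) (by fun_prop) measurable_id
  have hfactor : ∀ j, ∫⁻ ω, ENNReal.ofReal (Real.exp (-(y * (w j * Z j ω)))) ∂μ
      = ENNReal.ofReal (p j * √((1 - phat j) / phat j) + (1 - p j) * √(phat j / (1 - phat j))) := by
    intro j
    obtain ⟨h0, h1⟩ := hphat j
    rw [lintegral_exp_neg_mul_mul_eq (hZmeas j) (hZval j) hy (hp j) (hprob j), hw j,
      Real.exp_neg_half_mul_log_div h0 (sub_pos.mpr h1),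
      Real.exp_half_mul_log (div_pos h0 (sub_pos.mpr h1))]
  have hnonneg : ∀ j, 0 ≤ p j * √((1 - phat j) / phat j) + (1 - p j) * √(phat j / (1 - phat j)) :=
    fun j => by
      obtain ⟨hp0, hp1⟩ := hp j
      have := sub_nonneg.mpr hp1
      positivity
  calc _ ≤ ∫⁻ ω, ENNReal.ofReal ((1/2) * Real.exp (-(y * ∑ j, w j * Z j ω))) ∂μ :=
        measure_gaptron_ne_le hxU (by fun_prop) hUmeas hUdist hy
    _ = ENNReal.ofReal (1/2) * ∏ j, ∫⁻ ω, ENNReal.ofReal (Real.exp (-(y * (w j * Z j ω)))) ∂μ := by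
        simp_rw [ENNReal.ofReal_mul (by norm_num : (0:ℝ) ≤ 1/2)]
        rw [lintegral_const_mul' _ _ ENNReal.ofReal_ne_top,
          lintegral_exp_neg_mul_sum_eq_prod hZindep hZmeas]
    _ = _ := by
        simp_rw [hfactor]
        rw [← ENNReal.ofReal_prod_of_nonneg fun j _ => hnonneg j,
          ← ENNReal.ofReal_mul (by norm_num)]

/-- Let `K ≥ 1`, `y ∈ {-1,1}`, `p_j ∈ [0,1]`, `p̂_j ∈ (0,1)`, and
`Z_1,…,Z_K` independent `{-1,1}`-valued with `P(Z_j = y) = p_j`. Put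
`w_j = (1/2)ln(p̂_j/(1−p̂_j))` and `x = ∑_j w_j Z_j`, and let `ŷ` be the randomized
prediction that, conditionally on `Z`, equals `sign x` with probability
`1 − (1/2)e^{−|x|}` and `−sign x` with probability `(1/2)e^{−|x|}` (internal
randomness `U`, uniform on `[0,1]` and independent of `Z`; `sign 0 = 1`). Then
`P(ŷ ≠ y) ≤ (1/2)·∏_j (p_j √((1−p̂_j)/p̂_j) + (1−p_j) √(p̂_j/(1−p̂_j)))`. -/
theorem stmt4 {Ω : Type*} [MeasurableSpace Ω] (μ : Measure Ω) [IsProbabilityMeasure μ]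
    (K : ℕ) (hK : 1 ≤ K) (y : ℝ) (hy : y = 1 ∨ y = -1)
    (p : Fin K → ℝ) (hp : ∀ j, p j ∈ Set.Icc (0:ℝ) 1)
    (phat : Fin K → ℝ) (hphat : ∀ j, phat j ∈ Set.Ioo (0:ℝ) 1)
    (Z : Fin K → Ω → ℝ) (hZmeas : ∀ j, Measurable (Z j))
    (hZval : ∀ j ω, Z j ω = 1 ∨ Z j ω = -1)
    (U : Ω → ℝ) (hUmeas : Measurable U)
    (hUdist : Measure.map U μ = volume.restrict (Set.Icc (0:ℝ) 1))
    (hIndep : iIndepFun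
      (Sum.elim Z (fun _ : Unit => U)) μ)
    (hprob : ∀ j, μ {ω | Z j ω = y} = ENNReal.ofReal (p j))
    (w : Fin K → ℝ) (hw : ∀ j, w j = (1/2) * Real.log (phat j / (1 - phat j)))
    (x : Ω → ℝ) (hx : ∀ ω, x ω = ∑ j, w j * Z j ω)
    (Yhat : Ω → ℝ)
    (hYhat : ∀ ω, Yhat ω =
      if U ω ≤ (1/2) * Real.exp (-|x ω|) then -sgn (x ω) else sgn (x ω)) :
    μ {ω | Yhat ω ≠ y}
      ≤ ENNReal.ofReal ((1/2) * ∏ j,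
          (p j * Real.sqrt ((1 - phat j) / phat j)
            + (1 - p j) * Real.sqrt (phat j / (1 - phat j)))) :=
  stmt4_general μ K y hy p hp phat hphat Z hZmeas hZval U hUmeas hUdist hIndep hprob w hw x hx Yhat
    hYhat

end
end

section
/- Let K ≥ 1 be an integer, δ ∈ (0,1), L = ln(3/δ), and β = 18·L·K². For each j ∈ {1,…,K} let n_j ≥ 1 be an integer, α_j = min(β/n_j, 1/2), let p̂_j ∈ [α_j, 1−α_j], and let p_j ∈ [0,1] satisfy |p̂_j − p_j| ≤ √(2·p̂_j(1−p̂_j)·L/n_j) + 3L/n_j. Then Π_{j=1}^K ( p_j·√((1−p̂_j)/p̂_j) + (1−p_j)·√(p̂_j/(1−p̂_j)) ) ≤ (3/2)·exp(−2 Σ_{j=1}^K (1/2 − p̂_j)²). -/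
/-!
Writing `G = √(q(1-q))`, each factor equals `2G + (p - q)(1 - 2q)/G`. Since `4q(1-q) = 1 - 4(1/2 - q)²`,
the main part satisfies `2G ≤ exp (-2(1/2 - q)²)`. The truncation `q ∈ [α, 1-α]` forces
`q(1-q) ≥ α/2 = 9LK²/n` (or `q = 1/2`), which turns the Bernstein radius into a relative error
`|p - q| ≤ (√2 + 1)/(3K) · G²`, so the correction is at most `(√2 + 1)/(6K) · 2G`. Over `K` factors
this costs `(1 + (√2 + 1)/(6K))^K ≤ exp ((√2 + 1)/6) ≤ 3/2`.
-/

open Real Finset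

lemma sqrt_odds_mix_eq {p q : ℝ} (hq0 : 0 < q) (hq1 : q < 1) :
    p * √((1 - q) / q) + (1 - p) * √(q / (1 - q))
      = 2 * √(q * (1 - q)) + (p - q) * (1 - 2 * q) / √(q * (1 - q)) := by
  have h1q : 0 < 1 - q := by linarith
  have ha := sq_sqrt hq0.le
  have hb := sq_sqrt h1q.le
  have : 0 < √q := sqrt_pos.2 hq0
  have : 0 < √(1 - q) := sqrt_pos.2 h1q
  rw [sqrt_div' _ hq0.le, sqrt_div' _ h1q.le, sqrt_mul hq0.le]
  field_simp
  rw [ha, hb]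
  ring

lemma two_sqrt_mul_one_sub_le_exp (q : ℝ) : 2 * √(q * (1 - q)) ≤ exp (-2 * (1 / 2 - q) ^ 2) := by
  have hsq : exp (-2 * (1 / 2 - q) ^ 2) ^ 2 = exp (-4 * (1 / 2 - q) ^ 2) := by
    rw [← exp_nat_mul]; ring_nf
  calc 2 * √(q * (1 - q)) = √(2 ^ 2 * (q * (1 - q))) := by
        rw [sqrt_mul (x := 2 ^ 2) (by norm_num), sqrt_sq (by norm_num)]
    _ ≤ √(exp (-2 * (1 / 2 - q) ^ 2) ^ 2) := by
        refine sqrt_le_sqrt ?_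
        rw [hsq]
        linarith [add_one_le_exp (-4 * (1 / 2 - q) ^ 2)]
    _ = exp (-2 * (1 / 2 - q) ^ 2) := sqrt_sq (exp_pos _).le

lemma sqrt_odds_mix_le_of_relative_error {p q ε : ℝ} (hq0 : 0 < q) (hq1 : q < 1) (hε : 0 ≤ ε)
    (h : (p - q) * (1 - 2 * q) ≤ ε * (q * (1 - q))) :
    p * √((1 - q) / q) + (1 - p) * √(q / (1 - q)) ≤ (1 + ε / 2) * exp (-2 * (1 / 2 - q) ^ 2) := by
  have hv : 0 < q * (1 - q) := mul_pos hq0 (by linarith)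
  set G := √(q * (1 - q))
  have hGG : G ^ 2 = q * (1 - q) := sq_sqrt hv.le
  rw [sqrt_odds_mix_eq hq0 hq1]
  calc 2 * G + (p - q) * (1 - 2 * q) / G ≤ 2 * G + ε * G ^ 2 / G := by
        rw [hGG]
        gcongr
    _ = (1 + ε / 2) * (2 * G) := by field_simp
    _ ≤ (1 + ε / 2) * exp (-2 * (1 / 2 - q) ^ 2) := by
        gcongr; exact two_sqrt_mul_one_sub_le_exp q

lemma bernstein_radius_le {q L n k : ℝ} (hL : 0 ≤ L) (hn : 0 < n) (hk : 1 ≤ k)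
    (h : 9 * L * k ^ 2 / n ≤ q * (1 - q)) :
    √(2 * q * (1 - q) * L / n) + 3 * L / n ≤ (√2 + 1) / (3 * k) * (q * (1 - q)) := by
  set v := q * (1 - q)
  have hLn : L / n ≤ v / (9 * k ^ 2) := by
    rw [div_le_iff₀ hn] at h
    rw [div_le_div_iff₀ hn (by positivity)]
    linarith
  have hv : 0 ≤ v := le_trans (by positivity) h
  have hsqrt : √(2 * q * (1 - q) * L / n) ≤ √2 * v / (3 * k) := by
    calc √(2 * q * (1 - q) * L / n) = √2 * √(v * (L / n)) := by
          rw [← sqrt_mul (by norm_num)]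
          congr 1
          ring
      _ ≤ √2 * √(v * (v / (9 * k ^ 2))) := by gcongr
      _ = √2 * v / (3 * k) := by
          rw [show v * (v / (9 * k ^ 2)) = (v / (3 * k)) ^ 2 by ring, sqrt_sq (by positivity)]
          ring
  have hlin : 3 * L / n ≤ v / (3 * k) := by
    calc 3 * L / n ≤ 3 * (v / (9 * k ^ 2)) := by rw [mul_div_assoc]; gcongr
      _ = v / (3 * k) / k := by ring
      _ ≤ v / (3 * k) := div_le_self (by positivity) hk
  calc _ ≤ √2 * v / (3 * k) + v / (3 * k) := add_le_add hsqrt hlin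
    _ = (√2 + 1) / (3 * k) * v := by ring

lemma div_two_le_mul_one_sub_of_mem_Icc {a q : ℝ} (ha0 : 0 ≤ a) (ha : a ≤ 1 / 2)
    (hq : q ∈ Set.Icc a (1 - a)) : a / 2 ≤ q * (1 - q) := by
  obtain ⟨h1, h2⟩ := hq
  nlinarith [mul_nonneg (sub_nonneg.2 h1) (sub_nonneg.2 h2)]

lemma sqrt_odds_mix_le_of_truncated {n L p q k : ℝ} (hn : 0 < n) (hL : 0 < L) (hk : 1 ≤ k)
    (hq : q ∈ Set.Icc (min (18 * L * k ^ 2 / n) (1 / 2)) (1 - min (18 * L * k ^ 2 / n) (1 / 2)))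
    (herr : |q - p| ≤ √(2 * q * (1 - q) * L / n) + 3 * L / n) :
    p * √((1 - q) / q) + (1 - p) * √(q / (1 - q))
      ≤ (1 + (√2 + 1) / 6 / k) * exp (-2 * (1 / 2 - q) ^ 2) := by
  have hα : 0 < min (18 * L * k ^ 2 / n) (1 / 2) := lt_min (by positivity) (by norm_num)
  have hq0 : 0 < q := hα.trans_le hq.1
  have hq1 : q < 1 := by linarith [hq.2]
  rw [show (√2 + 1) / 6 / k = (√2 + 1) / (3 * k) / 2 by ring]
  refine sqrt_odds_mix_le_of_relative_error hq0 hq1 (by positivity) ?_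
  rcases le_total (18 * L * k ^ 2 / n) (1 / 2) with hsmall | hbig
  · rw [min_eq_left hsmall] at hq
    have hvar : 9 * L * k ^ 2 / n ≤ q * (1 - q) := by
      have := div_two_le_mul_one_sub_of_mem_Icc (by positivity) hsmall hq
      linarith [show 18 * L * k ^ 2 / n / 2 = 9 * L * k ^ 2 / n by ring]
    have h12 : |1 - 2 * q| ≤ 1 := abs_le.2 ⟨by linarith, by linarith⟩
    calc (p - q) * (1 - 2 * q) ≤ |q - p| * |1 - 2 * q| := by
          rw [abs_sub_comm, ← abs_mul]; exact le_abs_self _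
      _ ≤ |q - p| := mul_le_of_le_one_right (abs_nonneg _) h12
      _ ≤ _ := herr.trans (bernstein_radius_le hL.le hn hk hvar)
  · rw [min_eq_right hbig] at hq
    have : q = 1 / 2 := le_antisymm (by linarith [hq.2]) hq.1
    subst this
    norm_num
    positivity

lemma exp_sqrt_two_add_one_div_six_le : exp ((√2 + 1) / 6) ≤ 3 / 2 := by
  have hc : (√2 + 1) / 6 ≤ 0.403 := by
    nlinarith [sq_sqrt (show (0 : ℝ) ≤ 2 by norm_num), sqrt_nonneg 2]
  have h := exp_bound' (x := 0.403) (by norm_num) (by norm_num) (n := 4) (by norm_num)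
  norm_num [Finset.sum_range_succ, Nat.factorial] at h
  linarith [exp_le_exp.2 hc]

lemma one_add_div_pow_le_three_halves (K : ℕ) : (1 + (√2 + 1) / 6 / K) ^ K ≤ 3 / 2 := by
  have h := one_sub_div_pow_le_exp_neg (n := K) (t := -((√2 + 1) / 6)) (by
    have := sqrt_nonneg 2; have : (0 : ℝ) ≤ K := K.cast_nonneg; linarith)
  rw [neg_neg, neg_div, sub_neg_eq_add] at h
  exact h.trans exp_sqrt_two_add_one_div_six_le

/-- Let `K ≥ 1`, `δ ∈ (0,1)`, `L = ln(3/δ)`, `β = 18LK²`. For each `j`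
let `n_j ≥ 1`, `α_j = min(β/n_j, 1/2)`, `p̂_j ∈ [α_j, 1−α_j]`, and `p_j ∈ [0,1]` with
`|p̂_j − p_j| ≤ √(2 p̂_j(1−p̂_j) L/n_j) + 3L/n_j`. Then
`∏_j (p_j √((1−p̂_j)/p̂_j) + (1−p_j) √(p̂_j/(1−p̂_j))) ≤ (3/2)·exp(−2 ∑_j (1/2−p̂_j)²)`. -/
theorem stmt5 (K : ℕ) (hK : 1 ≤ K) (δ : ℝ) (hδ : δ ∈ Set.Ioo (0:ℝ) 1)
    (L β : ℝ) (hL : L = Real.log (3/δ)) (hβ : β = 18 * L * K^2)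
    (n : Fin K → ℕ) (hn : ∀ j, 1 ≤ n j)
    (α : Fin K → ℝ) (hα : ∀ j, α j = min (β / n j) (1/2))
    (phat p : Fin K → ℝ)
    (hphat : ∀ j, phat j ∈ Set.Icc (α j) (1 - α j))
    (hp : ∀ j, p j ∈ Set.Icc (0:ℝ) 1)
    (herr : ∀ j, |phat j - p j|
      ≤ Real.sqrt (2 * phat j * (1 - phat j) * L / n j) + 3 * L / n j) :
    (∏ j, (p j * Real.sqrt ((1 - phat j) / phat j)
        + (1 - p j) * Real.sqrt (phat j / (1 - phat j))))
      ≤ (3/2) * Real.exp (-2 * ∑ j, (1/2 - phat j)^2) := by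
  have hL0 : 0 < L := hL ▸ log_pos ((one_lt_div hδ.1).2 (by linarith [hδ.2]))
  have hterm (j : Fin K) : p j * √((1 - phat j) / phat j) + (1 - p j) * √(phat j / (1 - phat j))
      ≤ (1 + (√2 + 1) / 6 / K) * exp (-2 * (1 / 2 - phat j) ^ 2) :=
    sqrt_odds_mix_le_of_truncated (by exact_mod_cast hn j) hL0 (by exact_mod_cast hK)
      (by simpa only [hα, hβ] using hphat j) (herr j)
  have hnonneg (j : Fin K) :
      0 ≤ p j * √((1 - phat j) / phat j) + (1 - p j) * √(phat j / (1 - phat j)) :=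
    add_nonneg (mul_nonneg (hp j).1 (sqrt_nonneg _))
      (mul_nonneg (sub_nonneg.2 (hp j).2) (sqrt_nonneg _))
  calc _ ≤ ∏ j, (1 + (√2 + 1) / 6 / K) * exp (-2 * (1 / 2 - phat j) ^ 2) :=
        prod_le_prod (fun j _ => hnonneg j) (fun j _ => hterm j)
    _ = (1 + (√2 + 1) / 6 / K) ^ K * exp (-2 * ∑ j, (1 / 2 - phat j) ^ 2) := by
        rw [prod_mul_distrib, prod_const, card_univ, Fintype.card_fin, ← exp_sum, mul_sum]
    _ ≤ 3 / 2 * exp (-2 * ∑ j, (1 / 2 - phat j) ^ 2) := by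
        gcongr; exact one_add_div_pow_le_three_halves K
end
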